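/- Let H, W, k be positive integers with k ∣ H and k ∣ W, let w : ℤ → ℤ → ℂ be an arbitrary interpolation kernel, and let X : ℤ → ℤ → ℂ be an image. Define the k-fold down-sampled image D(X)(x',y') := Σ_{s=0}^{k-1} Σ_{t=0}^{k-1} w(s,t)·X(kx'+s, ky'+t). Then for every integer u with -H/k ≤ u ≤ H/k - 1 and every integer v with -W/k ≤ v ≤ W/k - 1, the 2D discrete Fourier transform of D(X) on the 2(H/k)×2(W/k) grid is the linear combination F_{D(X)}(u,v) = Σ_{u'=-H}^{H-1} Σ_{v'=-W}^{W-1} α(u,v,u',v')·F_X(u',v'), where the coefficient α(u,v,u',v') equals β(u',v')/k² if (2H/k) ∣ (u'-u) and (2W/k) ∣ (v'-v), and equals 0 otherwise, with β(u',v') := Σ_{s=0}^{k-1} Σ_{t=0}^{k-1} w(s,t)·exp(2πi(u's/(2H) + v't/(2W))), and F_X is the 2D discrete Fourier transform of X on the 2H×2W grid. -/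

import Mathlib

/-- The 2D discrete Fourier transform of an image `Z : ℤ → ℤ → ℂ` on the `2M × 2N` grid:
`F_Z(u,v) = ∑_{x=-M}^{M-1} ∑_{y=-N}^{N-1} Z(x,y)·exp(-2πi(ux/(2M) + vy/(2N)))`. -/
noncomputable def dft (M N : ℤ) (Z : ℤ → ℤ → ℂ) (u v : ℤ) : ℂ :=
  ∑ x ∈ Finset.Icc (-M) (M - 1), ∑ y ∈ Finset.Icc (-N) (N - 1),
    Z x y * Complex.exp (-(2 * (Real.pi : ℂ) * Complex.I) *
      ((u : ℂ) * (x : ℂ) / (2 * (M : ℂ)) + (v : ℂ) * (y : ℂ) / (2 * (N : ℂ))))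

/-- The `k`-fold down-sampled image with interpolation kernel `w`:
`D(X)(x',y') = ∑_{s=0}^{k-1} ∑_{t=0}^{k-1} w(s,t)·X(kx'+s, ky'+t)`. -/
noncomputable def downsample (k : ℤ) (w X : ℤ → ℤ → ℂ) (x' y' : ℤ) : ℂ :=
  ∑ s ∈ Finset.Icc (0 : ℤ) (k - 1), ∑ t ∈ Finset.Icc (0 : ℤ) (k - 1),
    w s t * X (k * x' + s) (k * y' + t)

/-- The frequency response of the kernel `w` on the `2H × 2W` grid:
`β(u',v') = ∑_{s=0}^{k-1} ∑_{t=0}^{k-1} w(s,t)·exp(2πi(u's/(2H) + v't/(2W)))`. -/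
noncomputable def beta (H W k : ℤ) (w : ℤ → ℤ → ℂ) (u' v' : ℤ) : ℂ :=
  ∑ s ∈ Finset.Icc (0 : ℤ) (k - 1), ∑ t ∈ Finset.Icc (0 : ℤ) (k - 1),
    w s t * Complex.exp ((2 * (Real.pi : ℂ) * Complex.I) *
      ((u' : ℂ) * (s : ℂ) / (2 * (H : ℂ)) + (v' : ℂ) * (t : ℂ) / (2 * (W : ℂ))))

/-!
Expand every sample `X (k x' + s) (k y' + t)` of the down-sampled image by the inverse DFT on
the `2H × 2W` grid. Summing over the coarse `2(H/k) × 2(W/k)` grid leaves the character sums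
`∑ x', exp (2πi (u' - u) x' / (2H/k))`, which vanish unless `2H/k ∣ u' - u` and otherwise equal
`2H/k` (likewise in `v`). The phases `exp (2πi (u' s / (2H) + v' t / (2W)))` contributed by the
offsets `s, t`, weighted by `w s t`, add up to `β(u', v')`.
-/

open Finset Complex Real

theorem Finset.sum_comm₄ {α β γ δ M : Type*} [AddCommMonoid M] (A : Finset α) (B : Finset β)
    (C : Finset γ) (D : Finset δ) (f : α → β → γ → δ → M) :
    ∑ a ∈ A, ∑ b ∈ B, ∑ c ∈ C, ∑ d ∈ D, f a b c d =
      ∑ c ∈ C, ∑ d ∈ D, ∑ a ∈ A, ∑ b ∈ B, f a b c d := by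
  simp_rw [sum_comm (s := B), sum_comm (s := A)]

theorem Finset.sum_sum_mul_sum_mul_sum {ι κ α β R : Type*} [CommSemiring R] (s : Finset ι)
    (t : Finset κ) (A : Finset α) (B : Finset β) (F : ι → κ → R) (f : ι → α → R)
    (g : κ → β → R) :
    ∑ a ∈ A, ∑ b ∈ B, ∑ i ∈ s, ∑ j ∈ t, F i j * f i a * g j b =
      ∑ i ∈ s, ∑ j ∈ t, F i j * (∑ a ∈ A, f i a) * ∑ b ∈ B, g j b := by
  simp_rw [mul_sum, sum_mul]
  rw [sum_comm₄]
  exact sum_congr rfl fun i _ => sum_congr rfl fun j _ => sum_comm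

theorem sum_zpow_Ico_of_pow_eq_one {K : Type*} [Field K] [DecidableEq K] {ξ : K} {L : ℕ}
    (hξ : ξ ^ L = 1) (a : ℤ) :
    ∑ j ∈ Ico a (a + L), ξ ^ j = if ξ = 1 then (L : K) else 0 := by
  rw [Int.Ico_eq_finset_map, sum_map]
  split_ifs with h
  · simp [h]
  · rcases eq_or_ne L 0 with rfl | hL
    · simp
    have hξ0 : ξ ≠ 0 := by rintro rfl; simp [hL] at hξ
    simp [zpow_add₀ hξ0, ← mul_sum, geom_sum_eq h, hξ]

theorem sum_Icc_exp_two_pi_I_mul_div (n : ℤ) (hn : 0 < n) (m : ℤ) :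
    ∑ j ∈ Icc (-n) (n - 1), cexp (2 * π * I * (m * j / (2 * n))) =
      if 2 * n ∣ m then (2 * n : ℂ) else 0 := by
  lift n to ℕ using hn.le
  have hζ := Complex.isPrimitiveRoot_exp (2 * n) (by omega)
  set ζ := cexp (2 * π * I / (2 * n : ℕ))
  have hterm : ∀ j : ℤ,
      cexp (2 * π * I * (m * j / (2 * ((n : ℤ) : ℂ)))) = (ζ ^ m) ^ j := by
    intro j
    rw [← exp_int_mul, ← exp_int_mul]
    congr 1
    push_cast
    ring
  have hIcc : Icc (-n : ℤ) (n - 1) = Ico (-n : ℤ) (-n + (2 * n : ℕ)) := by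
    ext
    simp only [mem_Icc, mem_Ico]
    omega
  have hperiod : (ζ ^ m) ^ (2 * n) = 1 := by
    rw [← zpow_natCast, ← zpow_mul, mul_comm, zpow_mul, zpow_natCast, hζ.pow_eq_one, one_zpow]
  rw [hIcc, sum_congr rfl fun j _ => hterm j, sum_zpow_Ico_of_pow_eq_one hperiod]
  simp [hζ.zpow_eq_one_iff_dvd]

theorem Int.two_mul_dvd_sub_iff_eq {n a b : ℤ} (ha : a ∈ Icc (-n) (n - 1))
    (hb : b ∈ Icc (-n) (n - 1)) : 2 * n ∣ a - b ↔ a = b := by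
  simp only [mem_Icc] at ha hb
  refine ⟨fun h => ?_, fun h => by simp [h]⟩
  have := Int.eq_zero_of_abs_lt_dvd h (abs_lt.mpr ⟨by omega, by omega⟩)
  omega

theorem dft_inversion {H W : ℤ} (hH : 0 < H) (hW : 0 < W) (X : ℤ → ℤ → ℂ) {x y : ℤ}
    (hx : x ∈ Icc (-H) (H - 1)) (hy : y ∈ Icc (-W) (W - 1)) :
    X x y = (4 * H * W : ℂ)⁻¹ * ∑ u ∈ Icc (-H) (H - 1), ∑ v ∈ Icc (-W) (W - 1),
        dft H W X u v * cexp (2 * π * I * (u * x / (2 * H) + v * y / (2 * W))) := by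
  have hH0 : (H : ℂ) ≠ 0 := Int.cast_ne_zero.mpr hH.ne'
  have hW0 : (W : ℂ) ≠ 0 := Int.cast_ne_zero.mpr hW.ne'
  have hsum : ∑ u ∈ Icc (-H) (H - 1), ∑ v ∈ Icc (-W) (W - 1),
        dft H W X u v * cexp (2 * π * I * (u * x / (2 * H) + v * y / (2 * W))) =
      ∑ x₀ ∈ Icc (-H) (H - 1), ∑ y₀ ∈ Icc (-W) (W - 1), X x₀ y₀ *
        (∑ u ∈ Icc (-H) (H - 1), cexp (2 * π * I * ((x - x₀ : ℤ) * u / (2 * H)))) *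
          ∑ v ∈ Icc (-W) (W - 1), cexp (2 * π * I * ((y - y₀ : ℤ) * v / (2 * W))) := by
    rw [← sum_sum_mul_sum_mul_sum]
    refine sum_congr rfl fun u _ => sum_congr rfl fun v _ => ?_
    simp only [dft, sum_mul]
    refine sum_congr rfl fun x₀ _ => sum_congr rfl fun y₀ _ => ?_
    simp only [mul_assoc (X x₀ y₀), ← Complex.exp_add]
    congr 2
    push_cast
    field_simp
    ring
  have hdelta : ∀ x₀ ∈ Icc (-H) (H - 1), ∀ y₀ ∈ Icc (-W) (W - 1),
      X x₀ y₀ * (if 2 * H ∣ x - x₀ then (2 * H : ℂ) else 0) *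
        (if 2 * W ∣ y - y₀ then (2 * W : ℂ) else 0) =
      if y = y₀ then if x = x₀ then 4 * H * W * X x₀ y₀ else 0 else 0 := by
    intro x₀ hx₀ y₀ hy₀
    simp only [Int.two_mul_dvd_sub_iff_eq hx hx₀, Int.two_mul_dvd_sub_iff_eq hy hy₀]
    split_ifs <;> ring
  simp_rw [hsum, sum_Icc_exp_two_pi_I_mul_div H hH, sum_Icc_exp_two_pi_I_mul_div W hW]
  rw [sum_congr rfl fun x₀ hx₀ => sum_congr rfl fun y₀ hy₀ => hdelta x₀ hx₀ y₀ hy₀]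
  simp only [sum_ite_eq, hx, hy, if_true]
  field_simp

theorem dft_subsample {M N k : ℤ} (hM : 0 < M) (hN : 0 < N) (X : ℤ → ℤ → ℂ) {s t : ℤ}
    (hs : s ∈ Icc 0 (k - 1)) (ht : t ∈ Icc 0 (k - 1)) (u v : ℤ) :
    dft M N (fun x y => X (k * x + s) (k * y + t)) u v =
      ∑ u' ∈ Icc (-(k * M)) (k * M - 1), ∑ v' ∈ Icc (-(k * N)) (k * N - 1),
        (if 2 * M ∣ u' - u ∧ 2 * N ∣ v' - v then
          cexp (2 * π * I * (u' * s / (2 * ((k * M : ℤ) : ℂ)) +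
            v' * t / (2 * ((k * N : ℤ) : ℂ)))) / (k : ℂ) ^ 2
          else 0) * dft (k * M) (k * N) X u' v' := by
  have hk : 0 < k := by simp only [mem_Icc] at hs; omega
  have hk0 : (k : ℂ) ≠ 0 := Int.cast_ne_zero.mpr hk.ne'
  have hM0 : (M : ℂ) ≠ 0 := Int.cast_ne_zero.mpr hM.ne'
  have hN0 : (N : ℂ) ≠ 0 := Int.cast_ne_zero.mpr hN.ne'
  have hH : 0 < k * M := mul_pos hk hM
  have hW : 0 < k * N := mul_pos hk hN
  have hmem : ∀ {n r : ℤ}, r ∈ Icc 0 (k - 1) → ∀ x ∈ Icc (-n) (n - 1),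
      k * x + r ∈ Icc (-(k * n)) (k * n - 1) := by
    intro n r hr x hx
    simp only [mem_Icc] at hr hx ⊢
    constructor <;> nlinarith
  set C : ℤ → ℤ → ℂ := fun u' v' =>
    (4 * ((k * M : ℤ) : ℂ) * ((k * N : ℤ) : ℂ))⁻¹ * dft (k * M) (k * N) X u' v' *
      cexp (2 * π * I * (u' * s / (2 * ((k * M : ℤ) : ℂ)) +
        v' * t / (2 * ((k * N : ℤ) : ℂ))))
  calc dft M N (fun x y => X (k * x + s) (k * y + t)) u v
      = ∑ x ∈ Icc (-M) (M - 1), ∑ y ∈ Icc (-N) (N - 1),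
          ∑ u' ∈ Icc (-(k * M)) (k * M - 1), ∑ v' ∈ Icc (-(k * N)) (k * N - 1), C u' v' *
            cexp (2 * π * I * ((u' - u : ℤ) * x / (2 * M))) *
            cexp (2 * π * I * ((v' - v : ℤ) * y / (2 * N))) := by
        refine sum_congr rfl fun x hx => sum_congr rfl fun y hy => ?_
        dsimp only
        rw [dft_inversion hH hW X (hmem hs x hx) (hmem ht y hy)]
        simp only [mul_sum, sum_mul]
        refine sum_congr rfl fun u' _ => sum_congr rfl fun v' _ => ?_
        simp only [C, mul_assoc, ← Complex.exp_add]
        congr 3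
        push_cast
        field_simp
        ring
    _ = ∑ u' ∈ Icc (-(k * M)) (k * M - 1), ∑ v' ∈ Icc (-(k * N)) (k * N - 1), C u' v' *
          (∑ x ∈ Icc (-M) (M - 1), cexp (2 * π * I * ((u' - u : ℤ) * x / (2 * M)))) *
          ∑ y ∈ Icc (-N) (N - 1), cexp (2 * π * I * ((v' - v : ℤ) * y / (2 * N))) :=
        sum_sum_mul_sum_mul_sum _ _ _ _ _ _ _
    _ = _ := by
        simp_rw [sum_Icc_exp_two_pi_I_mul_div M hM, sum_Icc_exp_two_pi_I_mul_div N hN]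
        refine sum_congr rfl fun u' _ => sum_congr rfl fun v' _ => ?_
        simp only [C]
        split_ifs <;> first | tauto | push_cast; field_simp; ring

theorem dft_downsample (M N k : ℤ) (w X : ℤ → ℤ → ℂ) (u v : ℤ) :
    dft M N (downsample k w X) u v =
      ∑ s ∈ Icc (0 : ℤ) (k - 1), ∑ t ∈ Icc (0 : ℤ) (k - 1),
        w s t * dft M N (fun x y => X (k * x + s) (k * y + t)) u v := by
  simp only [dft, downsample, sum_mul, mul_sum, mul_assoc]
  exact sum_comm₄ _ _ _ _ _

/-- The DFT of the `k`-fold down-sampled image at a low frequency `(u,v)` is a linear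
combination of the spectral values `F_X(u',v')` of the original image over the whole frequency
grid `[-H, H-1] × [-W, W-1]`, with coefficient `α(u,v,u',v') = β(u',v')/k²` when
`(2H/k) ∣ (u'-u)` and `(2W/k) ∣ (v'-v)`, and `0` otherwise. -/
theorem stmt_2 (H W k : ℤ) (hH : 0 < H) (hW : 0 < W) (hk : 0 < k)
    (hkH : k ∣ H) (hkW : k ∣ W) (w : ℤ → ℤ → ℂ) (X : ℤ → ℤ → ℂ) :
    ∀ u v : ℤ, -(H / k) ≤ u → u ≤ H / k - 1 → -(W / k) ≤ v → v ≤ W / k - 1 →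
      dft (H / k) (W / k) (downsample k w X) u v =
        ∑ u' ∈ Finset.Icc (-H) (H - 1), ∑ v' ∈ Finset.Icc (-W) (W - 1),
          (if (2 * (H / k)) ∣ (u' - u) ∧ (2 * (W / k)) ∣ (v' - v)
            then beta H W k w u' v' / (k : ℂ) ^ 2 else 0) * dft H W X u' v' := by
  intro u v _ _ _ _
  obtain ⟨M, rfl⟩ := hkH
  obtain ⟨N, rfl⟩ := hkW
  have hM : 0 < M := pos_of_mul_pos_right hH hk.le
  have hN : 0 < N := pos_of_mul_pos_right hW hk.le
  rw [Int.mul_ediv_cancel_left _ hk.ne', Int.mul_ediv_cancel_left _ hk.ne', dft_downsample,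
    sum_congr rfl fun s hs => sum_congr rfl fun t ht => by rw [dft_subsample hM hN X hs ht]]
  simp only [mul_sum]
  rw [sum_comm₄]
  refine sum_congr rfl fun u' _ => sum_congr rfl fun v' _ => ?_
  split_ifs
  · simp only [beta, sum_div, sum_mul, mul_div_assoc, mul_assoc]
  · simp
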